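/- For every self-adjoint f ∈ A(n,n'), the function t ↦ tr(f(t)) is continuous and real-valued on [0,1] and satisfies tr(f(0)) = (a/(a+1))·tr(f(1)). Conversely, for every continuous function g : [0,1] → ℝ with g(0) = (a/(a+1))·g(1), there exists a self-adjoint f ∈ A(n,n') with tr(f(t)) = g(t) for all t ∈ [0,1]. -/

import Mathlib

/-!
On self-adjoint `f` the trace is real because `tr(Mᴴ) = conj (tr M)`, and the boundary
condition holds for every `f ∈ A(n,n')`: with `c` as in the definition,
`tr(f 0) = a·Tr c / n'` and `tr(f 1) = (a+1)·Tr c / n'` (`Tr` the unnormalized trace).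
Conversely, `g` is realized by the scalar block matrix
`diag(g 1, …, g 1, (a+1)·g t - a·g 1) ⊗ 1ₙ`, whose last block vanishes at `t = 0`
precisely because `g 0 = a/(a+1) · g 1`.
-/

open scoped Matrix.Norms.L2Operator ComplexOrder
open Filter MeasureTheory

noncomputable section

/-- The unit interval `[0,1]`. -/
abbrev I01 : Type := unitInterval

/-- Square complex matrices of size `N`. -/
abbrev Mat (N : ℕ) : Type := Matrix (Fin N) (Fin N) ℂ

/-- Block-diagonal matrix with `m` diagonal blocks of size `k` (block `0` in the upper left),
realized as an `N × N` matrix, where `h : k * m = N`. -/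
def cdiag {k m N : ℕ} (h : k * m = N) (blocks : Fin m → Mat k) : Mat N :=
  Matrix.reindex (finProdFinEquiv.trans (finCongr h)) (finProdFinEquiv.trans (finCongr h))
    (Matrix.blockDiagonal blocks)

/-- The Razak building block `A(n, n')` with `n' = n * (a + 1)`, realized as a subset of
`C([0,1], M_N(ℂ))` where `h : n * (a + 1) = N`: those continuous matrix-valued functions `f`
for which there is `c ∈ M_n(ℂ)` with `f 0 = diag(c, …, c, 0_n)` (`a` copies of `c`) and
`f 1 = diag(c, …, c)` (`a + 1` copies of `c`). -/
def razakA (n a : ℕ) {N : ℕ} (h : n * (a + 1) = N) : Set C(I01, Mat N) :=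
  {f | ∃ c : Mat n,
    f 0 = cdiag h (fun i : Fin (a + 1) => if (i : ℕ) < a then c else 0) ∧
    f 1 = cdiag h (fun _ : Fin (a + 1) => c)}

/-- The normalized trace of a square complex matrix. -/
def ntr {N : ℕ} (M : Mat N) : ℂ := M.trace / N

open scoped Matrix

theorem Matrix.trace_reindex {m n R : Type*} [Fintype m] [Fintype n] [AddCommMonoid R]
    (e : m ≃ n) (A : Matrix m m R) : (Matrix.reindex e e A).trace = A.trace := by
  simp only [Matrix.trace, Matrix.diag, Matrix.reindex_apply, Matrix.submatrix_apply]
  exact e.symm.sum_comp (fun i => A i i)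

theorem Fin.sum_univ_ite_val_lt {M : Type*} [AddCommMonoid M] (a : ℕ) (x y : M) :
    ∑ i : Fin (a + 1), (if (i : ℕ) < a then x else y) = a • x + y := by
  simp [Fin.sum_univ_castSucc]

section cdiag
variable {k m N : ℕ} (h : k * m = N)

lemma trace_cdiag (b : Fin m → Mat k) : (cdiag h b).trace = ∑ i, (b i).trace := by
  rw [cdiag, Matrix.trace_reindex, Matrix.trace_blockDiagonal]

lemma conjTranspose_cdiag (b : Fin m → Mat k) : (cdiag h b)ᴴ = cdiag h (fun i => (b i)ᴴ) := by
  rw [cdiag, cdiag, Matrix.conjTranspose_reindex, Matrix.blockDiagonal_conjTranspose]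

lemma Continuous.cdiag {X : Type*} [TopologicalSpace X] {b : X → Fin m → Mat k}
    (hb : Continuous b) : Continuous fun x => cdiag h (b x) :=
  (continuous_id.matrix_blockDiagonal.comp hb).matrix_reindex _ _

end cdiag

lemma ntr_im_eq_zero_of_isHermitian {N : ℕ} {M : Mat N} (hM : M.IsHermitian) :
    (ntr M).im = 0 := by
  have : star M.trace = M.trace := by rw [← Matrix.trace_conjTranspose, hM.eq]
  rw [ntr, Complex.div_natCast_im, Complex.conj_eq_iff_im.mp this, zero_div]

lemma continuous_ntr {N : ℕ} : Continuous (ntr : Mat N → ℂ) :=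
  continuous_id.matrix_trace.div_const _

lemma ntr_apply_zero_of_mem_razakA {n a N : ℕ} {h : n * (a + 1) = N} {f : C(I01, Mat N)}
    (hf : f ∈ razakA n a h) : ntr (f 0) = ((a : ℂ) / ((a : ℂ) + 1)) * ntr (f 1) := by
  obtain ⟨c, hf0, hf1⟩ := hf
  simp only [ntr, hf0, hf1, trace_cdiag, apply_ite Matrix.trace, Matrix.trace_zero,
    Fin.sum_univ_ite_val_lt, Finset.sum_const, Finset.card_univ, Fintype.card_fin,
    nsmul_eq_mul, add_zero]
  have : (a : ℂ) + 1 ≠ 0 := by exact_mod_cast Nat.succ_ne_zero a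
  push_cast
  field_simp

section razakLift
variable (n a : ℕ) {N : ℕ} (h : n * (a + 1) = N) (g : C(I01, ℝ))

def razakLift : C(I01, Mat N) where
  toFun t := cdiag h fun i : Fin (a + 1) =>
    ((if (i : ℕ) < a then g 1 else (a + 1) * g t - a * g 1 : ℝ) : ℂ) • (1 : Mat n)
  continuous_toFun := Continuous.cdiag h <| continuous_pi fun i => by
    split_ifs <;> fun_prop

lemma razakLift_mem_razakA (hg : g 0 = ((a : ℝ) / ((a : ℝ) + 1)) * g 1) :
    razakLift n a h g ∈ razakA n a h := by
  have hβ0 : (a + 1) * g 0 - a * g 1 = 0 := by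
    rw [hg]; field_simp; ring
  have hβ1 : (a + 1) * g 1 - a * g 1 = g 1 := by ring
  refine ⟨((g 1 : ℝ) : ℂ) • 1, ?_, ?_⟩ <;>
    · simp only [razakLift, ContinuousMap.coe_mk]
      congr 1; funext i
      split_ifs <;> simp only [hβ0, hβ1, Complex.ofReal_zero, zero_smul]

lemma star_razakLift : star (razakLift n a h g) = razakLift n a h g := by
  ext t : 1
  rw [ContinuousMap.star_apply, Matrix.star_eq_conjTranspose]
  simp only [razakLift, ContinuousMap.coe_mk, conjTranspose_cdiag, Matrix.conjTranspose_smul,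
    Matrix.conjTranspose_one, Complex.star_def, Complex.conj_ofReal]

lemma ntr_razakLift (hn : 0 < n) (t : I01) : ntr (razakLift n a h g t) = g t := by
  subst h
  simp only [razakLift, ContinuousMap.coe_mk, ntr, trace_cdiag, Matrix.trace_smul,
    Matrix.trace_one, Fintype.card_fin]
  rw [← Finset.sum_smul, ← Complex.ofReal_sum, Fin.sum_univ_ite_val_lt]
  have : (n : ℂ) ≠ 0 := by exact_mod_cast hn.ne'
  have : (a : ℂ) + 1 ≠ 0 := by exact_mod_cast Nat.succ_ne_zero a
  push_cast
  field_simp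
  ring

end razakLift

theorem razak_trace_functions_general (n a : ℕ) (hn : 0 < n) :
    (∀ f ∈ razakA n a rfl, star f = f →
      Continuous (fun t : I01 => ntr (f t)) ∧
      (∀ t : I01, (ntr (f t)).im = 0) ∧
      ntr (f 0) = ((a : ℂ) / ((a : ℂ) + 1)) * ntr (f 1)) ∧
    (∀ g : C(I01, ℝ), g 0 = ((a : ℝ) / ((a : ℝ) + 1)) * g 1 →
      ∃ f ∈ razakA n a rfl, star f = f ∧ ∀ t : I01, ntr (f t) = ((g t : ℝ) : ℂ)) := by
  refine ⟨fun f hf hsa => ⟨continuous_ntr.comp f.continuous, fun t => ?_,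
      ntr_apply_zero_of_mem_razakA hf⟩,
    fun g hg => ⟨razakLift n a rfl g, razakLift_mem_razakA n a rfl g hg,
      star_razakLift n a rfl g, ntr_razakLift n a rfl g hn⟩⟩
  have hft : (f t)ᴴ = f t := by
    rw [← Matrix.star_eq_conjTranspose, ← ContinuousMap.star_apply, hsa]
  exact ntr_im_eq_zero_of_isHermitian hft

/-- for self-adjoint `f ∈ A(n,n')`, `t ↦ tr(f(t))` is a continuous real-valued
function with `tr(f(0)) = (a/(a+1))·tr(f(1))`; conversely every continuous `g : [0,1] → ℝ`
with `g(0) = (a/(a+1))·g(1)` arises this way from some self-adjoint `f ∈ A(n,n')`. -/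
theorem razak_trace_functions (n a : ℕ) (hn : 0 < n) (ha : 0 < a) :
    (∀ f ∈ razakA n a rfl, star f = f →
      Continuous (fun t : I01 => ntr (f t)) ∧
      (∀ t : I01, (ntr (f t)).im = 0) ∧
      ntr (f 0) = ((a : ℂ) / ((a : ℂ) + 1)) * ntr (f 1)) ∧
    (∀ g : C(I01, ℝ), g 0 = ((a : ℝ) / ((a : ℝ) + 1)) * g 1 →
      ∃ f ∈ razakA n a rfl, star f = f ∧ ∀ t : I01, ntr (f t) = ((g t : ℝ) : ℂ)) :=
  razak_trace_functions_general n a hn
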